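/- Let u = (μ₁ - μ₀)/‖μ₁ - μ₀‖₂, m = (μ₀+μ₁)/2, and let v̂ be a unit vector and m̂ a point with ‖v̂ - u‖₂ ≤ ε₁ and ‖m̂ - m‖₂ ≤ ε₂. For X ~ N(μ₁, I_d), P(v̂ᵀ(X - m̂) ≤ 0) ≤ Φ(-(‖μ₁-μ₀‖₂/2 - ε₁‖μ₁ - m‖₂ - ε₂)) whenever ‖μ₁-μ₀‖₂/2 ≥ ε₁‖μ₁ - m‖₂ + ε₂. -/

import Mathlib

open MeasureTheory ProbabilityTheory Matrix Filter
open scoped ENNReal NNReal BigOperators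

/-- Euclidean norm on `Fin d → ℝ`. -/
noncomputable def euclNorm {d : ℕ} (x : Fin d → ℝ) : ℝ := Real.sqrt (∑ i, x i ^ 2)

/-- The multivariate Gaussian `N(μ, I_d)` as a product of one-dimensional Gaussians. -/
noncomputable def stdGaussianVec {d : ℕ} (μ : Fin d → ℝ) : Measure (Fin d → ℝ) :=
  Measure.pi fun i => gaussianReal (μ i) 1

open Real

lemma gaussianPDFReal_conv (m₁ m₂ : ℝ) (v₁ v₂ : ℝ≥0) (h₁ : v₁ ≠ 0) (h₂ : v₂ ≠ 0) (z x : ℝ) :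
    gaussianPDFReal m₁ v₁ x * gaussianPDFReal m₂ v₂ (z - x)
      = gaussianPDFReal (m₁ + m₂) (v₁ + v₂) z *
        gaussianPDFReal (m₁ + (v₁ : ℝ) / ((v₁ : ℝ) + v₂) * (z - m₁ - m₂))
          (v₁ * v₂ / (v₁ + v₂)) x := by
  have hA : (0:ℝ) < v₁ := lt_of_le_of_ne (v₁.2) (by exact_mod_cast Ne.symm h₁)
  have hB : (0:ℝ) < v₂ := lt_of_le_of_ne (v₂.2) (by exact_mod_cast Ne.symm h₂)
  have hAB : (0:ℝ) < (v₁:ℝ) + v₂ := by linarith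
  simp only [gaussianPDFReal, NNReal.coe_div, NNReal.coe_mul, NNReal.coe_add]
  have hconst : (√(2 * π * v₁))⁻¹ * (√(2 * π * v₂))⁻¹
      = (√(2 * π * ((v₁:ℝ) + v₂)))⁻¹ * (√(2 * π * ((v₁:ℝ) * v₂ / ((v₁:ℝ) + v₂))))⁻¹ := by
    rw [← mul_inv, ← mul_inv, ← Real.sqrt_mul (by positivity), ← Real.sqrt_mul (by positivity)]
    congr 1
    congr 1
    field_simp
  have hexp : rexp (-(x - m₁) ^ 2 / (2 * v₁)) * rexp (-(z - x - m₂) ^ 2 / (2 * v₂))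
      = rexp (-(z - (m₁ + m₂)) ^ 2 / (2 * ((v₁:ℝ) + v₂))) *
        rexp (-(x - (m₁ + (v₁ : ℝ) / ((v₁:ℝ) + v₂) * (z - m₁ - m₂))) ^ 2
          / (2 * ((v₁:ℝ) * v₂ / ((v₁:ℝ) + v₂)))) := by
    rw [← Real.exp_add, ← Real.exp_add]
    congr 1
    field_simp
    ring
  calc (√(2 * π * v₁))⁻¹ * rexp (-(x - m₁) ^ 2 / (2 * v₁)) *
        ((√(2 * π * v₂))⁻¹ * rexp (-(z - x - m₂) ^ 2 / (2 * v₂)))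
      = ((√(2 * π * v₁))⁻¹ * (√(2 * π * v₂))⁻¹) *
        (rexp (-(x - m₁) ^ 2 / (2 * v₁)) * rexp (-(z - x - m₂) ^ 2 / (2 * v₂))) := by ring
    _ = _ := by rw [hconst, hexp]; ring

lemma lintegral_gaussianPDF_conv (m₁ m₂ : ℝ) {v₁ v₂ : ℝ≥0} (h₁ : v₁ ≠ 0) (h₂ : v₂ ≠ 0) (z : ℝ) :
    ∫⁻ x, gaussianPDF m₁ v₁ x * gaussianPDF m₂ v₂ (z - x)
      = gaussianPDF (m₁ + m₂) (v₁ + v₂) z := by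
  have hs : v₁ + v₂ ≠ 0 := by simp [add_eq_zero, h₁]
  have hw : v₁ * v₂ / (v₁ + v₂) ≠ 0 := div_ne_zero (mul_ne_zero h₁ h₂) hs
  simp only [gaussianPDF, ← ENNReal.ofReal_mul (gaussianPDFReal_nonneg _ _ _)]
  simp_rw [gaussianPDFReal_conv m₁ m₂ v₁ v₂ h₁ h₂ z,
    ENNReal.ofReal_mul (gaussianPDFReal_nonneg _ _ _)]
  rw [lintegral_const_mul _ ((measurable_gaussianPDFReal _ _).ennreal_ofReal),
    lintegral_gaussianPDFReal_eq_one _ hw, mul_one]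

lemma gaussianReal_conv (m₁ m₂ : ℝ) (v₁ v₂ : ℝ≥0) :
    ((gaussianReal m₁ v₁).prod (gaussianReal m₂ v₂)).map (fun p : ℝ × ℝ => p.1 + p.2)
      = gaussianReal (m₁ + m₂) (v₁ + v₂) := by
  by_cases h₁ : v₁ = 0
  · subst h₁
    rw [gaussianReal_zero_var, Measure.dirac_prod,
      Measure.map_map measurable_add measurable_prodMk_left]
    have : ((fun p : ℝ × ℝ => p.1 + p.2) ∘ Prod.mk m₁) = (m₁ + ·) := rfl
    rw [this, gaussianReal_map_const_add, add_comm m₂ m₁, zero_add]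
  by_cases h₂ : v₂ = 0
  · subst h₂
    rw [gaussianReal_zero_var, Measure.prod_dirac,
      Measure.map_map measurable_add measurable_prodMk_right]
    have : ((fun p : ℝ × ℝ => p.1 + p.2) ∘ (fun x => (x, m₂))) = (· + m₂) := rfl
    rw [this, gaussianReal_map_add_const, add_zero]
  have hs : v₁ + v₂ ≠ 0 := by simp [add_eq_zero, h₁]
  ext s hsm
  rw [Measure.map_apply measurable_add hsm,
    Measure.prod_apply (measurable_add hsm),
    gaussianReal_of_var_ne_zero _ h₁,
    lintegral_withDensity_eq_lintegral_mul _ (measurable_gaussianPDF _ _)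
      (measurable_measure_prodMk_left (measurable_add hsm))]
  have hinner : ∀ x : ℝ,
      gaussianReal m₂ v₂ (Prod.mk x ⁻¹' ((fun p : ℝ × ℝ => p.1 + p.2) ⁻¹' s))
        = ∫⁻ z in s, gaussianPDF m₂ v₂ (z - x) := by
    intro x
    have hpre : (Prod.mk x ⁻¹' ((fun p : ℝ × ℝ => p.1 + p.2) ⁻¹' s))
        = (fun y => x + y) ⁻¹' s := rfl
    rw [hpre, gaussianReal_of_var_ne_zero _ h₂,
      withDensity_apply _ (measurable_const_add x hsm),
      ← lintegral_indicator (measurable_const_add x hsm) _]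
    have heq : ∀ y : ℝ,
        ((fun y => x + y) ⁻¹' s).indicator (gaussianPDF m₂ v₂) y
          = s.indicator (fun z => gaussianPDF m₂ v₂ (z - x)) (x + y) := by
      intro y
      by_cases hy : x + y ∈ s
      · rw [Set.indicator_of_mem hy, Set.indicator_of_mem (by exact hy), add_sub_cancel_left]
      · rw [Set.indicator_of_notMem hy, Set.indicator_of_notMem (by exact hy)]
    simp_rw [heq]
    rw [lintegral_add_left_eq_self (s.indicator fun z => gaussianPDF m₂ v₂ (z - x)) x,
      lintegral_indicator hsm _]
  have : ∫⁻ x, (gaussianPDF m₁ v₁ * fun x =>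
        gaussianReal m₂ v₂ (Prod.mk x ⁻¹' ((fun p : ℝ × ℝ => p.1 + p.2) ⁻¹' s))) x
      = ∫⁻ x, gaussianPDF m₁ v₁ x * ∫⁻ z in s, gaussianPDF m₂ v₂ (z - x) := by
    refine lintegral_congr fun x => ?_
    rw [Pi.mul_apply, hinner x]
  rw [this]
  have hswap : ∫⁻ x, gaussianPDF m₁ v₁ x * ∫⁻ z in s, gaussianPDF m₂ v₂ (z - x)
      = ∫⁻ z in s, ∫⁻ x, gaussianPDF m₁ v₁ x * gaussianPDF m₂ v₂ (z - x) := by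
    have h1 : ∀ x : ℝ, gaussianPDF m₁ v₁ x * ∫⁻ z in s, gaussianPDF m₂ v₂ (z - x)
        = ∫⁻ z in s, gaussianPDF m₁ v₁ x * gaussianPDF m₂ v₂ (z - x) := fun x =>
      (lintegral_const_mul _ ((measurable_gaussianPDF m₂ v₂).comp (by fun_prop))).symm
    simp_rw [h1]
    rw [lintegral_lintegral_swap]
    exact (((measurable_gaussianPDF m₁ v₁).comp measurable_fst).mul
      ((measurable_gaussianPDF m₂ v₂).comp (measurable_snd.sub measurable_fst))).aemeasurable
  rw [hswap]
  have h2 : ∀ z : ℝ, ∫⁻ x, gaussianPDF m₁ v₁ x * gaussianPDF m₂ v₂ (z - x)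
      = gaussianPDF (m₁ + m₂) (v₁ + v₂) z := fun z =>
    lintegral_gaussianPDF_conv m₁ m₂ h₁ h₂ z
  simp_rw [h2]
  rw [gaussianReal_of_var_ne_zero _ hs, withDensity_apply _ hsm]

lemma pi_gaussian_map_dot :
    ∀ (n : ℕ) (v μ : Fin n → ℝ),
    (Measure.pi fun i => gaussianReal (μ i) 1).map (fun x => ∑ i, v i * x i)
      = gaussianReal (∑ i, v i * μ i) (∑ i, (NNReal.mk (v i ^ 2) (sq_nonneg _))) := by
  intro n
  induction n with
  | zero =>
    intro v μ
    rw [Measure.pi_of_empty]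
    rw [Measure.map_dirac' (by fun_prop)]
    simp [gaussianReal_zero_var]
  | succ n ih =>
    intro v μ
    have h := ((measurePreserving_piFinSuccAbove (fun i => gaussianReal (μ i) 1) 0).symm
      (MeasurableEquiv.piFinSuccAbove (fun _ => ℝ) 0))
    rw [← h.map_eq, Measure.map_map (by fun_prop) (MeasurableEquiv.measurable _)]
    have hfun : ((fun x : Fin (n+1) → ℝ => ∑ i, v i * x i) ∘
          (MeasurableEquiv.piFinSuccAbove (fun _ => ℝ) 0).symm)
        = (fun q : ℝ × ℝ => q.1 + q.2) ∘
          (Prod.map (fun a : ℝ => v 0 * a) (fun y : Fin n → ℝ => ∑ j, v j.succ * y j)) := by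
      ext p
      simp [MeasurableEquiv.piFinSuccAbove_symm_apply, Fin.sum_univ_succ, Fin.insertNth_zero,
        Function.comp]
    rw [hfun, ← Measure.map_map measurable_add (by fun_prop),
      ← Measure.map_prod_map _ _ (by fun_prop) (by fun_prop)]
    have htail : (Measure.pi fun j : Fin n => gaussianReal (μ ((0 : Fin (n+1)).succAbove j)) 1)
        = Measure.pi fun j : Fin n => gaussianReal (μ j.succ) 1 := by
      simp [Fin.succAbove_zero]
    rw [htail, ih (fun j => v j.succ) (fun j => μ j.succ),
      gaussianReal_map_const_mul (v := 1) (v 0), gaussianReal_conv]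
    congr 1
    · rw [Fin.sum_univ_succ]
    · rw [Fin.sum_univ_succ (f := fun i => (NNReal.mk (v i ^ 2) (sq_nonneg _))), mul_one]

lemma euclNorm_nonneg {d : ℕ} (x : Fin d → ℝ) : 0 ≤ euclNorm x := Real.sqrt_nonneg _

lemma sq_euclNorm {d : ℕ} (x : Fin d → ℝ) : euclNorm x ^ 2 = ∑ i, x i ^ 2 :=
  Real.sq_sqrt (Finset.sum_nonneg fun i _ => sq_nonneg _)

lemma dot_le_euclNorm {d : ℕ} (a b : Fin d → ℝ) : a ⬝ᵥ b ≤ euclNorm a * euclNorm b := by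
  have h := Finset.sum_mul_sq_le_sq_mul_sq Finset.univ a b
  have h2 : a ⬝ᵥ b ≤ |∑ i, a i * b i| := le_abs_self _
  refine h2.trans ?_
  rw [← Real.sqrt_sq_eq_abs, euclNorm, euclNorm, ← Real.sqrt_mul (by positivity)]
  exact Real.sqrt_le_sqrt h

lemma neg_dot_le_euclNorm {d : ℕ} (a b : Fin d → ℝ) :
    -(euclNorm a * euclNorm b) ≤ a ⬝ᵥ b := by
  have h := dot_le_euclNorm (-a) b
  have h1 : (-a) ⬝ᵥ b = -(a ⬝ᵥ b) := by simp [dotProduct, Finset.sum_neg_distrib]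
  have h2 : euclNorm (-a) = euclNorm a := by
    unfold euclNorm; congr 1; exact Finset.sum_congr rfl fun i _ => by simp
  rw [h1, h2] at h
  linarith

/-- Misclassification bound with an approximate direction and an approximate threshold point:
if `‖v̂-u‖ ≤ ε₁`, `‖m̂-m‖ ≤ ε₂`, and `‖μ₁-μ₀‖/2 ≥ ε₁‖μ₁-m‖ + ε₂`, then for `X ~ N(μ₁,I)`,
`P(v̂ᵀ(X-m̂) ≤ 0) ≤ Φ(-(‖μ₁-μ₀‖/2 - ε₁‖μ₁-m‖ - ε₂))`. -/
theorem approx_direction_and_center {d : ℕ} (μ₀ μ₁ : Fin d → ℝ) (hμ : μ₀ ≠ μ₁)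
    (u m : Fin d → ℝ) (hu : u = (euclNorm (μ₁ - μ₀))⁻¹ • (μ₁ - μ₀))
    (hm : m = fun i => (μ₀ i + μ₁ i) / 2)
    (vh mh : Fin d → ℝ) (hvh : euclNorm vh = 1)
    (ε₁ ε₂ : ℝ) (hε₁ : euclNorm (vh - u) ≤ ε₁) (hε₂ : euclNorm (mh - m) ≤ ε₂)
    (hsep : ε₁ * euclNorm (μ₁ - m) + ε₂ ≤ euclNorm (μ₁ - μ₀) / 2) :
    stdGaussianVec μ₁ {x | vh ⬝ᵥ (x - mh) ≤ 0}
      ≤ gaussianReal 0 1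
          (Set.Iic (-(euclNorm (μ₁ - μ₀) / 2 - ε₁ * euclNorm (μ₁ - m) - ε₂))) := by
  set D : ℝ := euclNorm (μ₁ - μ₀) with hD
  set N : ℝ := euclNorm (μ₁ - m) with hN
  -- positivity of D
  have hw : μ₁ - μ₀ ≠ 0 := sub_ne_zero_of_ne (Ne.symm hμ)
  have hDpos : 0 < D := by
    rw [hD, euclNorm]
    apply Real.sqrt_pos.mpr
    obtain ⟨i, hi⟩ := Function.ne_iff.mp hw
    exact Finset.sum_pos' (fun j _ => sq_nonneg _)
      ⟨i, Finset.mem_univ i, by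
        have : μ₁ i - μ₀ i ≠ 0 := by simpa using hi
        positivity⟩
  -- key inequality : vh ⬝ᵥ (μ₁ - mh) ≥ D/2 - ε₁ N - ε₂
  have hudot : u ⬝ᵥ (μ₁ - m) = D / 2 := by
    have hm2 : μ₁ - m = (2⁻¹ : ℝ) • (μ₁ - μ₀) := by
      funext i; simp [hm, Pi.smul_apply, smul_eq_mul]; ring
    have hww : (μ₁ - μ₀) ⬝ᵥ (μ₁ - μ₀) = D ^ 2 := by
      rw [hD, sq_euclNorm]; simp [dotProduct, sq]
    rw [hu, hm2, smul_dotProduct, dotProduct_smul, smul_eq_mul, smul_eq_mul, hww]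
    field_simp
  have hNnonneg : 0 ≤ N := euclNorm_nonneg _
  have hcs1 : -(ε₁ * N) ≤ (vh - u) ⬝ᵥ (μ₁ - m) := by
    have := neg_dot_le_euclNorm (vh - u) (μ₁ - m)
    have hmul : euclNorm (vh - u) * N ≤ ε₁ * N :=
      mul_le_mul_of_nonneg_right hε₁ hNnonneg
    linarith
  have hcs2 : -ε₂ ≤ vh ⬝ᵥ (m - mh) := by
    have := neg_dot_le_euclNorm vh (m - mh)
    have h2 : euclNorm (m - mh) = euclNorm (mh - m) := by
      unfold euclNorm; congr 1; exact Finset.sum_congr rfl fun i _ => by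
        simp [Pi.sub_apply]; ring
    rw [hvh, one_mul, h2] at this
    linarith
  have hsplit : vh ⬝ᵥ (μ₁ - mh)
      = u ⬝ᵥ (μ₁ - m) + (vh - u) ⬝ᵥ (μ₁ - m) + vh ⬝ᵥ (m - mh) := by
    simp only [dotProduct_sub, sub_dotProduct]
    ring
  have hkey : D / 2 - ε₁ * N - ε₂ ≤ vh ⬝ᵥ (μ₁ - mh) := by
    rw [hsplit, hudot]; linarith
  -- variance is 1
  have hvar : (∑ i, (NNReal.mk (vh i ^ 2) (sq_nonneg _))) = 1 := by
    have h1 : (∑ i, vh i ^ 2) = 1 := by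
      have := sq_euclNorm vh
      rw [hvh] at this; simpa using this.symm
    have : ((∑ i, (NNReal.mk (vh i ^ 2) (sq_nonneg _))) : ℝ) = 1 := by
      push_cast
      exact h1
    exact NNReal.coe_injective (by rw [NNReal.coe_one, NNReal.coe_sum]; exact this)
  -- rewrite the set as a preimage
  have hset : {x : Fin d → ℝ | vh ⬝ᵥ (x - mh) ≤ 0}
      = (fun x : Fin d → ℝ => ∑ i, vh i * x i) ⁻¹' Set.Iic (vh ⬝ᵥ mh) := by
    ext x
    simp only [Set.mem_setOf_eq, Set.mem_preimage, Set.mem_Iic, dotProduct, Pi.sub_apply,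
      mul_sub, Finset.sum_sub_distrib, sub_nonpos]
  rw [hset, stdGaussianVec,
    ← Measure.map_apply (by fun_prop) measurableSet_Iic,
    pi_gaussian_map_dot d vh μ₁, hvar]
  have hmean : gaussianReal (∑ i, vh i * μ₁ i) 1 (Set.Iic (vh ⬝ᵥ mh))
      = gaussianReal 0 1 (Set.Iic (vh ⬝ᵥ mh - ∑ i, vh i * μ₁ i)) := by
    have := gaussianReal_map_add_const (μ := 0) (v := 1) (∑ i, vh i * μ₁ i)
    rw [zero_add] at this
    rw [← this, Measure.map_apply (measurable_add_const _) measurableSet_Iic]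
    congr 1
    ext y
    simp [Set.mem_Iic, le_sub_iff_add_le]
  rw [hmean]
  apply measure_mono
  apply Set.Iic_subset_Iic.mpr
  have hdot : vh ⬝ᵥ mh = ∑ i, vh i * mh i := rfl
  have hdotsub : vh ⬝ᵥ (μ₁ - mh) = (∑ i, vh i * μ₁ i) - ∑ i, vh i * mh i := by
    simp [dotProduct_sub, dotProduct, mul_sub, Finset.sum_sub_distrib]
  rw [hdotsub] at hkey
  linarith
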